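/- arXiv:0808.2747 — 6 statements merged into one kernel-verified Lean document; each statement's English description precedes it below -/
import Mathlib

section
/- Let ∅ = A_0 ⊊ A_1 ⊊ … ⊊ A_n = X be strictly nested subsets of a nonempty finite set X and let 0 = β_0 ≤ β_1 ≤ … ≤ β_n = 1 be real numbers. For x ∈ X let i(x) = min{i : x ∈ A_i} and define π̄(x) = β_{i(x)}. Then π̄ is a possibility distribution on X and its credal set satisfies 𝒫_{π̄} = {p : p is a probability distribution on X and P(A_i) ≤ β_i for i = 1,…,n}. -/
open Finset
open scoped Classical

variable {X : Type*}

/-- A probability distribution on a finite set `X`. -/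
def IsProbDist [Fintype X] (p : X → ℝ) : Prop :=
  (∀ x, 0 ≤ p x) ∧ ∑ x, p x = 1

/-- Maximum of `f` over the finite set `A`, with the maximum over the empty set taken to be 0. -/
noncomputable def finMax {ι : Type*} (A : Finset ι) (f : ι → ℝ) : ℝ :=
  if h : A.Nonempty then A.sup' h f else 0

/-- A possibility distribution on a finite set `X`. -/
def IsPossDist [Fintype X] (π : X → ℝ) : Prop :=
  (∀ x, 0 ≤ π x ∧ π x ≤ 1) ∧ ∃ x, π x = 1

/-- Necessity measure of a possibility distribution: `N(A) = 1 - max_{x ∈ Aᶜ} π x`. -/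
noncomputable def necessity [Fintype X] [DecidableEq X] (π : X → ℝ) (A : Finset X) : ℝ :=
  1 - finMax Aᶜ π

/-- The credal set induced by a possibility distribution. -/
def credalPoss [Fintype X] [DecidableEq X] (π : X → ℝ) : Set (X → ℝ) :=
  {p | IsProbDist p ∧ ∀ A : Finset X, necessity π A ≤ ∑ x ∈ A, p x}

/-- The index `i(x) = min {i | x ∈ A i}` of the first nested set containing `x`. -/
noncomputable def idxOf (A : ℕ → Finset X) (x : X) : ℕ := sInf {i | x ∈ A i}

/-- The upper possibility distribution `π̄(x) = β_{i(x)}` of a generalized p-box. -/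
noncomputable def piUpper (A : ℕ → Finset X) (β : ℕ → ℝ) (x : X) : ℝ :=
  β (idxOf A x)

/-- The lower possibility distribution
`π̲(x) = 1 − max({0} ∪ {α_j : 0 ≤ j ≤ n, α_j < α_{i(x)}})` of a generalized p-box. -/
noncomputable def piLower (A : ℕ → Finset X) (α : ℕ → ℝ) (n : ℕ) (x : X) : ℝ :=
  1 - max 0 (finMax ((Finset.range (n + 1)).filter (fun j => α j < α (idxOf A x))) α)

/-- The credal set of a generalized p-box given by nested sets `A i` and bounds `α i ≤ β i`,
`i = 1, …, n`. -/
def credalGPB [Fintype X] (n : ℕ) (A : ℕ → Finset X) (α β : ℕ → ℝ) : Set (X → ℝ) :=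
  {p | IsProbDist p ∧ ∀ k, 1 ≤ k → k ≤ n →
    α k ≤ ∑ x ∈ A k, p x ∧ ∑ x ∈ A k, p x ≤ β k}

/-!
Writing `B = Aᶜ`, the constraints `N(A) ≤ P(A)` of the credal set say exactly that
`P(B) ≤ max_{x ∈ B} π(x)` for every `B`. For `π̄` and `B = A_i` the right-hand side is at most `β_i`,
which gives the constraints `P(A_i) ≤ β_i`. Conversely, if `x₀ ∈ B` has the largest index `m = i(x₀)`
in `B`, then `B ⊆ A_m` by nestedness, so `P(B) ≤ P(A_m) ≤ β_m = π̄(x₀)`.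
-/

lemma le_finMax {ι : Type*} {s : Finset ι} (f : ι → ℝ) {i : ι} (hi : i ∈ s) :
    f i ≤ finMax s f := by
  rw [finMax, dif_pos ⟨i, hi⟩]
  exact le_sup' f hi

lemma finMax_le {ι : Type*} {s : Finset ι} {f : ι → ℝ} {c : ℝ} (hc : 0 ≤ c)
    (h : ∀ i ∈ s, f i ≤ c) : finMax s f ≤ c := by
  unfold finMax
  split
  · exact sup'_le _ f h
  · exact hc

lemma IsProbDist.sum_compl [Fintype X] [DecidableEq X] {p : X → ℝ} (hp : IsProbDist p)
    (B : Finset X) : ∑ x ∈ Bᶜ, p x = 1 - ∑ x ∈ B, p x := by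
  rw [← hp.2, ← sum_add_sum_compl B p, add_sub_cancel_left]

lemma forall_necessity_le_sum_iff [Fintype X] [DecidableEq X] {π p : X → ℝ}
    (hp : IsProbDist p) :
    (∀ A, necessity π A ≤ ∑ x ∈ A, p x) ↔ ∀ B, ∑ x ∈ B, p x ≤ finMax B π := by
  refine compl_involutive.surjective.forall.trans (forall_congr' fun B => ?_)
  rw [necessity, compl_compl, ← sub_le_sub_iff_left 1, ← hp.sum_compl, sub_sub_cancel,
    compl_compl]

section Nested

variable {A : ℕ → Finset X} {n : ℕ}

lemma monotoneOn_of_ssubset_succ (hA : ∀ i, i < n → A i ⊂ A (i + 1)) :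
    MonotoneOn A (Set.Iic n) :=
  monotoneOn_of_le_succ Set.ordConnected_Iic fun i _ _ hi =>
    (hA i (Order.succ_le_iff.mp hi)).subset

lemma idxOf_le {x : X} {i : ℕ} (hx : x ∈ A i) : idxOf A x ≤ i :=
  Nat.sInf_le hx

lemma mem_idxOf {x : X} {i : ℕ} (hx : x ∈ A i) : x ∈ A (idxOf A x) :=
  Nat.sInf_mem (s := {i | x ∈ A i}) ⟨i, hx⟩

lemma idxOf_pos (hA0 : A 0 = ∅) {x : X} {i : ℕ} (hx : x ∈ A i) : 0 < idxOf A x := by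
  refine Nat.pos_of_ne_zero fun h => ?_
  simpa [h, hA0] using mem_idxOf hx

lemma mem_iff_idxOf_le (hA : MonotoneOn A (Set.Iic n)) {x : X} (hx : x ∈ A n) {i : ℕ}
    (hi : i ≤ n) : x ∈ A i ↔ idxOf A x ≤ i :=
  ⟨idxOf_le, fun h => hA (h.trans hi) hi h (mem_idxOf hx)⟩

lemma exists_idxOf_eq [Fintype X] [Nonempty X] (hA0 : A 0 = ∅) (hAn : A n = univ)
    (hA : ∀ i, i < n → A i ⊂ A (i + 1)) : ∃ x, idxOf A x = n := by
  obtain ⟨m, rfl⟩ : ∃ m, n = m + 1 := by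
    refine Nat.exists_eq_succ_of_ne_zero fun hn => ?_
    rw [hn, hA0] at hAn
    exact univ_nonempty.ne_empty hAn.symm
  obtain ⟨x, hx, hxm⟩ := exists_of_ssubset (hA m m.lt_succ_self)
  have hle := idxOf_le hx
  have hnot := (mem_iff_idxOf_le (monotoneOn_of_ssubset_succ hA) hx m.le_succ).not.mp hxm
  exact ⟨x, by omega⟩

variable {β : ℕ → ℝ}

lemma isPossDist_piUpper [Fintype X] [Nonempty X] (hA0 : A 0 = ∅) (hAn : A n = univ)
    (hA : ∀ i, i < n → A i ⊂ A (i + 1)) (hβ0 : β 0 = 0) (hβn : β n = 1)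
    (hβ : MonotoneOn β (Set.Iic n)) : IsPossDist (piUpper A β) := by
  have hidx (x : X) : idxOf A x ≤ n := idxOf_le (hAn ▸ mem_univ x)
  refine ⟨fun x => ⟨?_, ?_⟩, ?_⟩
  · exact hβ0 ▸ hβ (Nat.zero_le n) (hidx x) (Nat.zero_le _)
  · exact hβn ▸ hβ (hidx x) Set.self_mem_Iic (hidx x)
  · obtain ⟨x, hx⟩ := exists_idxOf_eq hA0 hAn hA
    exact ⟨x, by rw [piUpper, hx, hβn]⟩

lemma finMax_piUpper_le (hβ0 : β 0 = 0) (hβ : MonotoneOn β (Set.Iic n)) {i : ℕ}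
    (hi : i ≤ n) : finMax (A i) (piUpper A β) ≤ β i :=
  finMax_le (hβ0 ▸ hβ (Nat.zero_le n) hi (Nat.zero_le i)) fun _ hx =>
    hβ ((idxOf_le hx).trans hi) hi (idxOf_le hx)

lemma sum_le_finMax_piUpper [Fintype X] {p : X → ℝ} (hp : ∀ x, 0 ≤ p x) (hA0 : A 0 = ∅)
    (hAn : A n = univ) (hA : MonotoneOn A (Set.Iic n))
    (hbound : ∀ i, 1 ≤ i → i ≤ n → ∑ x ∈ A i, p x ≤ β i) (B : Finset X) :
    ∑ x ∈ B, p x ≤ finMax B (piUpper A β) := by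
  rcases B.eq_empty_or_nonempty with rfl | hB
  · simp [finMax]
  obtain ⟨x₀, hx₀, hmax⟩ := exists_max_image B (idxOf A) hB
  have hxn (x : X) : x ∈ A n := hAn ▸ mem_univ x
  have hm : idxOf A x₀ ≤ n := idxOf_le (hxn x₀)
  have hBsub : B ⊆ A (idxOf A x₀) := fun x hx =>
    (mem_iff_idxOf_le hA (hxn x) hm).mpr (hmax x hx)
  calc ∑ x ∈ B, p x ≤ ∑ x ∈ A (idxOf A x₀), p x :=
        sum_le_sum_of_subset_of_nonneg hBsub fun x _ _ => hp x
    _ ≤ piUpper A β x₀ := hbound _ (idxOf_pos hA0 (hxn x₀)) hm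
    _ ≤ finMax B (piUpper A β) := le_finMax _ hx₀

end Nested

theorem statement1 [Fintype X] [Nonempty X] [DecidableEq X]
    (n : ℕ) (A : ℕ → Finset X) (β : ℕ → ℝ)
    (hA0 : A 0 = ∅) (hAn : A n = Finset.univ)
    (hAnest : ∀ i, i < n → A i ⊂ A (i + 1))
    (hβ0 : β 0 = 0) (hβn : β n = 1)
    (hβmono : ∀ i j, i ≤ j → j ≤ n → β i ≤ β j) :
    IsPossDist (piUpper A β) ∧
      ∀ p : X → ℝ,
        p ∈ credalPoss (piUpper A β) ↔
          (IsProbDist p ∧ ∀ i, 1 ≤ i → i ≤ n → ∑ x ∈ A i, p x ≤ β i) := by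
  have hβ : MonotoneOn β (Set.Iic n) := fun i _ j hj hij => hβmono i j hij hj
  refine ⟨isPossDist_piUpper hA0 hAn hAnest hβ0 hβn hβ, fun p => ⟨?_, ?_⟩⟩
  · rintro ⟨hp, hN⟩
    rw [forall_necessity_le_sum_iff hp] at hN
    exact ⟨hp, fun i _ hi => (hN (A i)).trans (finMax_piUpper_le hβ0 hβ hi)⟩
  · rintro ⟨hp, hbound⟩
    exact ⟨hp, (forall_necessity_le_sum_iff hp).mpr
      (sum_le_finMax_piUpper hp.1 hA0 hAn (monotoneOn_of_ssubset_succ hAnest) hbound)⟩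
end

section
/- Let a generalized p-box on a nonempty finite set X be given by strictly nested sets ∅ = A_0 ⊊ A_1 ⊊ … ⊊ A_n = X with bounds α_i, β_i, credal set 𝒫, and G_k = A_k ∖ A_{k−1}. Let i, l, m, j be integers with 1 ≤ i, l ≥ 0, m ≥ 2 and i + l + m ≤ j ≤ n, and let A = (⋃_{k=i}^{i+l} G_k) ∪ (⋃_{k=i+l+m}^{j} G_k). Then the minimum of P(A) over all probability distributions p ∈ 𝒫 equals max(0, α_{i+l} − β_{i−1}) + max(0, α_j − β_{i+l+m−1}). -/
/-!
Since the sets are nested, `A` is the disjoint union of `A_{i+l} \ A_{i-1}` and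
`A_j \ A_{i+l+m-1}`, so `P(A)` is the sum of two increments of the cumulative profile
`k ↦ P(A_k)`, and the box constraints bound an increment `P(A_b) - P(A_a)` below by
`max 0 (α_b - β_a)`. Conversely every nondecreasing profile `F` with `F_0 = 0`, `F_n = 1` and
`α ≤ F ≤ β` is the profile of a distribution in the credal set (put mass `F_{k+1} - F_k` on one
point of `G_{k+1}`). The profile that follows `β` up to `i-1`, then grows only as `α` forces it,
returns to `β` before `i+l+m` (this needs `m ≥ 2`) and again grows only as `α` forces it,
attains both lower bounds at once.
-/

open Finset
open scoped Classical

variable {X : Type*}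

section NestedChain

variable {A : ℕ → Finset X} {n : ℕ}

theorem nested_subset (hA : ∀ k < n, A k ⊆ A (k + 1)) {s t : ℕ} (hst : s ≤ t) (ht : t ≤ n) :
    A s ⊆ A t := by
  induction t, hst using Nat.le_induction with
  | base => exact Subset.rfl
  | succ t _ ih => exact (ih (by omega)).trans (hA t (by omega))

theorem biUnion_Icc_sdiff_pred [DecidableEq X] (hA : ∀ k < n, A k ⊆ A (k + 1)) {a b : ℕ}
    (ha : 1 ≤ a) (hab : a ≤ b) (hb : b ≤ n) :
    (Icc a b).biUnion (fun k => A k \ A (k - 1)) = A b \ A (a - 1) := by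
  induction b, hab using Nat.le_induction with
  | base => simp
  | succ b hab ih =>
    rw [← Finset.insert_Icc_right_eq_Icc_add_one (by omega), biUnion_insert, ih (by omega),
      Nat.add_sub_cancel]
    exact sdiff_union_sdiff_cancel (hA b (by omega)) (nested_subset hA (by omega) (by omega))

theorem exists_nonneg_sum_eq_sub [Nonempty X] (hA : ∀ k < n, A k ⊂ A (k + 1)) (F : ℕ → ℝ)
    (hF : ∀ k < n, F k ≤ F (k + 1)) :
    ∃ p : X → ℝ, (∀ x, 0 ≤ p x) ∧ ∀ r ≤ n, ∑ x ∈ A r, p x = F r - F 0 := by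
  have hpt : ∀ k, ∃ x, k < n → x ∈ A (k + 1) ∧ x ∉ A k := fun k => by
    by_cases hk : k < n
    · obtain ⟨x, hx⟩ := exists_of_ssubset (hA k hk)
      exact ⟨x, fun _ => hx⟩
    · exact ⟨Classical.arbitrary X, fun h => absurd h hk⟩
  choose pt hpt using hpt
  have hsub : ∀ k < n, A k ⊆ A (k + 1) := fun k hk => (hA k hk).subset
  have hmem : ∀ k < n, ∀ r ≤ n, pt k ∈ A r ↔ k < r := fun k hk r hr =>
    ⟨fun h => not_le.1 fun hrk => (hpt k hk).2 (nested_subset hsub hrk hk.le h),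
      fun h => nested_subset hsub h hr (hpt k hk).1⟩
  refine ⟨fun x => ∑ k ∈ range n, (Pi.single (pt k) (F (k + 1) - F k) : X → ℝ) x,
    fun x => ?_, fun r hr => ?_⟩
  · refine sum_nonneg fun k hk => ?_
    rw [Pi.single_apply]
    split_ifs
    · exact sub_nonneg.2 (hF k (mem_range.1 hk))
    · exact le_rfl
  · rw [sum_comm, ← sum_range_sub F r]
    simp only [sum_pi_single']
    have hfilter : (range n).filter (fun k => pt k ∈ A r) = range r := by
      ext k
      simp only [mem_filter, mem_range]
      exact ⟨fun ⟨hk, h⟩ => (hmem k hk r hr).1 h,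
        fun h => ⟨h.trans_le hr, (hmem k (h.trans_le hr) r hr).2 h⟩⟩
    rw [← sum_filter, hfilter]

end NestedChain

section CredalSet

variable [Fintype X] {n : ℕ} {A : ℕ → Finset X} {α β : ℕ → ℝ}

theorem max_zero_sub_le_sum_sdiff [DecidableEq X] (hA0 : A 0 = ∅) (hA : ∀ k < n, A k ⊆ A (k + 1))
    (hβ0 : β 0 = 0) {p : X → ℝ} (hp : p ∈ credalGPB n A α β) {a b : ℕ} (hab : a ≤ b)
    (hb0 : 1 ≤ b) (hb : b ≤ n) :
    max 0 (α b - β a) ≤ ∑ x ∈ A b \ A a, p x := by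
  obtain ⟨⟨hp0, -⟩, hpA⟩ := hp
  have hsub := nested_subset hA hab hb
  have hαb : α b ≤ ∑ x ∈ A b, p x := (hpA b hb0 hb).1
  have hβa : ∑ x ∈ A a, p x ≤ β a := by
    rcases Nat.eq_zero_or_pos a with rfl | ha
    · simp [hA0, hβ0]
    · exact (hpA a ha (hab.trans hb)).2
  have hmono : ∑ x ∈ A a, p x ≤ ∑ x ∈ A b, p x :=
    sum_le_sum_of_subset_of_nonneg hsub fun x _ _ => hp0 x
  rw [sum_sdiff_eq_sub hsub]
  exact max_le (by linarith) (by linarith)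

theorem exists_mem_credalGPB_sum_eq [Nonempty X] (hAn : A n = univ)
    (hA : ∀ k < n, A k ⊂ A (k + 1)) {F : ℕ → ℝ} (hF0 : F 0 = 0) (hFn : F n = 1)
    (hF : ∀ k < n, F k ≤ F (k + 1)) (hαF : ∀ k ≤ n, α k ≤ F k) (hFβ : ∀ k ≤ n, F k ≤ β k) :
    ∃ p ∈ credalGPB n A α β, ∀ r ≤ n, ∑ x ∈ A r, p x = F r := by
  obtain ⟨p, hp0, hpF⟩ := exists_nonneg_sum_eq_sub hA F hF
  simp only [hF0, sub_zero] at hpF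
  refine ⟨p, ⟨⟨hp0, ?_⟩, fun k _ hk => ?_⟩, hpF⟩
  · rw [← hFn, ← hpF n le_rfl, hAn]
  · rw [hpF k hk]
    exact ⟨hαF k hk, hFβ k hk⟩

end CredalSet

noncomputable def minGrowthCdf (α β : ℕ → ℝ) (a k : ℕ) : ℝ :=
  if k < a then β k else max (β (a - 1)) (α k)

noncomputable def twoGapCdf (α β : ℕ → ℝ) (a b c k : ℕ) : ℝ :=
  if k ≤ b then minGrowthCdf α β a k else minGrowthCdf α β c k

section Profiles

variable {n : ℕ} {α β : ℕ → ℝ}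

theorem le_minGrowthCdf (hαβ : ∀ k ≤ n, α k ≤ β k) (a : ℕ) {k : ℕ} (hk : k ≤ n) :
    α k ≤ minGrowthCdf α β a k := by
  unfold minGrowthCdf
  split_ifs
  · exact hαβ k hk
  · exact le_max_right _ _

theorem minGrowthCdf_le (hβ : ∀ s t, s ≤ t → t ≤ n → β s ≤ β t) (hαβ : ∀ k ≤ n, α k ≤ β k)
    (a : ℕ) {k : ℕ} (hk : k ≤ n) : minGrowthCdf α β a k ≤ β k := by
  unfold minGrowthCdf
  split_ifs
  · exact le_rfl
  · exact max_le (hβ _ _ (by omega) hk) (hαβ k hk)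

theorem minGrowthCdf_le_succ (hα : ∀ s t, s ≤ t → t ≤ n → α s ≤ α t)
    (hβ : ∀ s t, s ≤ t → t ≤ n → β s ≤ β t) (a : ℕ) {k : ℕ}
    (hk : k < n) : minGrowthCdf α β a k ≤ minGrowthCdf α β a (k + 1) := by
  unfold minGrowthCdf
  split_ifs
  · exact hβ _ _ (by omega) hk
  · rw [show k = a - 1 by omega]
    exact le_max_left _ _
  · omega
  · exact max_le_max le_rfl (hα _ _ (by omega) hk)

theorem β_min_le_minGrowthCdf (a k : ℕ) : β (min k (a - 1)) ≤ minGrowthCdf α β a k := by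
  unfold minGrowthCdf
  split_ifs
  · rw [min_eq_left (by omega)]
  · rw [min_eq_right (by omega)]
    exact le_max_left _ _

theorem le_twoGapCdf (hαβ : ∀ k ≤ n, α k ≤ β k) (a b c : ℕ) {k : ℕ} (hk : k ≤ n) :
    α k ≤ twoGapCdf α β a b c k := by
  unfold twoGapCdf
  split_ifs <;> exact le_minGrowthCdf hαβ _ hk

theorem twoGapCdf_le (hβ : ∀ s t, s ≤ t → t ≤ n → β s ≤ β t) (hαβ : ∀ k ≤ n, α k ≤ β k)
    (a b c : ℕ) {k : ℕ} (hk : k ≤ n) : twoGapCdf α β a b c k ≤ β k := by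
  unfold twoGapCdf
  split_ifs <;> exact minGrowthCdf_le hβ hαβ _ hk

theorem twoGapCdf_le_succ (hα : ∀ s t, s ≤ t → t ≤ n → α s ≤ α t)
    (hβ : ∀ s t, s ≤ t → t ≤ n → β s ≤ β t) (hαβ : ∀ k ≤ n, α k ≤ β k) (a : ℕ) {b c : ℕ}
    (hbc : b < c) {k : ℕ} (hk : k < n) :
    twoGapCdf α β a b c k ≤ twoGapCdf α β a b c (k + 1) := by
  unfold twoGapCdf
  split_ifs
  · exact minGrowthCdf_le_succ hα hβ a hk
  · calc minGrowthCdf α β a k ≤ β k := minGrowthCdf_le hβ hαβ a hk.le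
      _ ≤ β (min (k + 1) (c - 1)) := hβ _ _ (by omega) (by omega)
      _ ≤ minGrowthCdf α β c (k + 1) := β_min_le_minGrowthCdf c (k + 1)
  · omega
  · exact minGrowthCdf_le_succ hα hβ c hk

theorem twoGapCdf_sub_left {a b : ℕ} (ha : 1 ≤ a) (hab : a ≤ b) (c : ℕ) :
    twoGapCdf α β a b c b - twoGapCdf α β a b c (a - 1) = max 0 (α b - β (a - 1)) := by
  simp only [twoGapCdf, minGrowthCdf, if_pos le_rfl, if_pos (show a - 1 ≤ b by omega),
    if_pos (show a - 1 < a by omega), if_neg (show ¬ b < a by omega)]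
  rw [← max_sub_sub_right, sub_self]

theorem twoGapCdf_sub_right (a : ℕ) {b c d : ℕ} (hbc : b + 1 < c) (hcd : c ≤ d) :
    twoGapCdf α β a b c d - twoGapCdf α β a b c (c - 1) = max 0 (α d - β (c - 1)) := by
  simp only [twoGapCdf, minGrowthCdf, if_neg (show ¬ d ≤ b by omega),
    if_neg (show ¬ c - 1 ≤ b by omega), if_pos (show c - 1 < c by omega),
    if_neg (show ¬ d < c by omega)]
  rw [← max_sub_sub_right, sub_self]

end Profiles

theorem statement6_general [Fintype X] [Nonempty X] [DecidableEq X]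
    (n : ℕ) (A : ℕ → Finset X) (α β : ℕ → ℝ)
    (hA0 : A 0 = ∅) (hAn : A n = Finset.univ)
    (hAnest : ∀ i, i < n → A i ⊂ A (i + 1))
    (hαn : α n = 1)
    (hαmono : ∀ i j, i ≤ j → j ≤ n → α i ≤ α j)
    (hβ0 : β 0 = 0) (hβn : β n = 1)
    (hβmono : ∀ i j, i ≤ j → j ≤ n → β i ≤ β j)
    (hαβ : ∀ i, i ≤ n → α i ≤ β i)
    (i l m j : ℕ) (hi : 1 ≤ i) (hm : 2 ≤ m) (hilm : i + l + m ≤ j) (hj : j ≤ n) :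
    IsLeast
      ((fun p : X → ℝ =>
          ∑ x ∈ ((Finset.Icc i (i + l)).biUnion (fun k => A k \ A (k - 1)) ∪
                  (Finset.Icc (i + l + m) j).biUnion (fun k => A k \ A (k - 1))), p x) ''
        credalGPB n A α β)
      (max 0 (α (i + l) - β (i - 1)) + max 0 (α j - β (i + l + m - 1))) := by
  have hA : ∀ k < n, A k ⊆ A (k + 1) := fun k hk => (hAnest k hk).subset
  have hsub₁ : A (i - 1) ⊆ A (i + l) := nested_subset hA (by omega) (by omega)
  have hsub₂ : A (i + l + m - 1) ⊆ A j := nested_subset hA (by omega) hj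
  have hdisj : Disjoint (A (i + l) \ A (i - 1)) (A j \ A (i + l + m - 1)) :=
    disjoint_sdiff.mono_left (sdiff_subset.trans (nested_subset hA (by omega) (by omega)))
  rw [biUnion_Icc_sdiff_pred hA hi (by omega) (by omega),
    biUnion_Icc_sdiff_pred hA (by omega) hilm hj]
  set F := twoGapCdf α β i (i + l) (i + l + m)
  have hF0 : F 0 = 0 := by
    simp only [F, twoGapCdf, minGrowthCdf, if_pos (Nat.zero_le _), if_pos (show 0 < i by omega),
      hβ0]
  have hFn : F n = 1 := le_antisymm (hβn ▸ twoGapCdf_le hβmono hαβ _ _ _ le_rfl)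
    (hαn ▸ le_twoGapCdf hαβ _ _ _ le_rfl)
  obtain ⟨p, hp, hpF⟩ := exists_mem_credalGPB_sum_eq hAn hAnest hF0 hFn
    (fun k hk => twoGapCdf_le_succ hαmono hβmono hαβ i (by omega) hk)
    (fun k hk => le_twoGapCdf hαβ _ _ _ hk) (fun k hk => twoGapCdf_le hβmono hαβ _ _ _ hk)
  refine ⟨⟨p, hp, ?_⟩, ?_⟩
  · beta_reduce
    rw [sum_union hdisj, sum_sdiff_eq_sub hsub₁, sum_sdiff_eq_sub hsub₂, hpF _ (by omega),
      hpF _ (by omega), hpF _ hj, hpF _ (by omega), twoGapCdf_sub_left hi (by omega),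
      twoGapCdf_sub_right i (by omega) hilm]
  · rintro _ ⟨q, hq, rfl⟩
    beta_reduce
    rw [sum_union hdisj]
    exact add_le_add
      (max_zero_sub_le_sum_sdiff hA0 hA hβ0 hq (a := i - 1) (b := i + l) (by omega) (by omega)
        (by omega))
      (max_zero_sub_le_sum_sdiff hA0 hA hβ0 hq (a := i + l + m - 1) (by omega) (by omega) hj)

theorem statement6 [Fintype X] [Nonempty X] [DecidableEq X]
    (n : ℕ) (A : ℕ → Finset X) (α β : ℕ → ℝ)
    (hA0 : A 0 = ∅) (hAn : A n = Finset.univ)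
    (hAnest : ∀ i, i < n → A i ⊂ A (i + 1))
    (hα0 : α 0 = 0) (hαn : α n = 1)
    (hαmono : ∀ i j, i ≤ j → j ≤ n → α i ≤ α j)
    (hβ0 : β 0 = 0) (hβn : β n = 1)
    (hβmono : ∀ i j, i ≤ j → j ≤ n → β i ≤ β j)
    (hαβ : ∀ i, i ≤ n → α i ≤ β i)
    (i l m j : ℕ) (hi : 1 ≤ i) (hm : 2 ≤ m) (hilm : i + l + m ≤ j) (hj : j ≤ n) :
    IsLeast
      ((fun p : X → ℝ =>
          ∑ x ∈ ((Finset.Icc i (i + l)).biUnion (fun k => A k \ A (k - 1)) ∪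
                  (Finset.Icc (i + l + m) j).biUnion (fun k => A k \ A (k - 1))), p x) ''
        credalGPB n A α β)
      (max 0 (α (i + l) - β (i - 1)) + max 0 (α j - β (i + l + m - 1))) :=
  statement6_general n A α β hA0 hAn hAnest hαn hαmono hβ0 hβn hβmono hαβ i l m j hi hm hilm hj
end

section
/- Let a generalized p-box on a nonempty finite set X be given by strictly nested sets ∅ = A_0 ⊊ A_1 ⊊ … ⊊ A_n = X with bounds α_i, β_i, credal set 𝒫, and G_k = A_k ∖ A_{k−1}. For A ⊆ X let K = {k ∈ {1,…,n} : G_k ⊆ A} and let A_* = ⋃_{k∈K} G_k. Write K as the disjoint union of its maximal runs of consecutive integers {i_1,…,j_1}, …, {i_R,…,j_R}. Then the minimum of P(A) over all p ∈ 𝒫 equals the minimum of P(A_*) over all p ∈ 𝒫, and both equal ∑_{r=1}^{R} max(0, α_{j_r} − β_{i_r−1}). -/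
open Finset
open scoped Classical

variable {X : Type*}

/-! For every `p` in the credal set, `P(A) ≥ P(A_*) = ∑_{k ∈ K} P(G_k)`, and over a run
`{i, …, j}` of `K` the layers telescope to `P(A_j) - P(A_{i-1}) ≥ max 0 (α_j - β_{i-1})`.
The bound is attained by putting mass `c_k - c_{k-1}` on one point of each `G_k`, chosen outside
`A` whenever `G_k ⊄ A`, where `c_k = max α_k β_{m(k)}` and `m(k)` is the last index `≤ k` outside
`K`. Then `P(A_j) = c_j` respects the box, the layers outside `K` contribute nothing to `P(A)`,
and the mass gained along a run is exactly `max 0 (α_j - β_{i-1})`. -/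

theorem Finset.sum_Icc_sub_pred {M : Type*} [AddCommGroup M] (f : ℕ → M) {i j : ℕ}
    (hi : 1 ≤ i) (hij : i ≤ j + 1) :
    ∑ k ∈ Icc i j, (f k - f (k - 1)) = f j - f (i - 1) := by
  obtain ⟨i, rfl⟩ := Nat.exists_eq_add_of_le' hi
  rw [← Ico_add_one_right_eq_Icc, ← sum_Ico_add' (fun k => f k - f (k - 1))]
  simpa using sum_Ico_sub f (by omega : i ≤ j)

section Nested

variable {n : ℕ} {A : ℕ → Finset X}

theorem subset_of_ssubset_succ (hA : ∀ i, i < n → A i ⊂ A (i + 1)) {i j : ℕ}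
    (hij : i ≤ j) (hj : j ≤ n) : A i ⊆ A j := by
  induction j, hij using Nat.le_induction with
  | base => exact subset_rfl
  | succ j _ ih => exact (ih (by omega)).trans (hA j (by omega)).subset

variable [DecidableEq X]

theorem layer_nonempty (hA : ∀ i, i < n → A i ⊂ A (i + 1)) {k : ℕ} (hk : k ∈ Icc 1 n) :
    (A k \ A (k - 1)).Nonempty := by
  rw [mem_Icc] at hk
  have h := hA (k - 1) (by omega)
  rw [Nat.sub_add_cancel hk.1] at h
  exact sdiff_nonempty.mpr h.not_subset

theorem pairwiseDisjoint_layers (hA : ∀ i j, i ≤ j → j ≤ n → A i ⊆ A j) :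
    (↑(Icc 1 n) : Set ℕ).PairwiseDisjoint (fun k => A k \ A (k - 1)) := by
  suffices h : ∀ k ∈ Icc 1 n, ∀ l ∈ Icc 1 n, k < l →
      Disjoint (A k \ A (k - 1)) (A l \ A (l - 1)) by
    intro k hk l hl hkl
    rcases hkl.lt_or_gt with hlt | hlt
    exacts [h k hk l hl hlt, (h l hl k hk hlt).symm]
  intro k hk l hl hkl
  rw [mem_Icc] at hk hl
  exact disjoint_sdiff_self_right.mono_left
    (sdiff_subset.trans (hA k (l - 1) (by omega) (by omega)))

end Nested

section Runs

variable {R : ℕ} {I J : ℕ → ℕ}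

theorem run_end_succ_lt_start (hIJ : ∀ r, 1 ≤ r → r ≤ R → I r ≤ J r)
    (hgap : ∀ r, 1 ≤ r → r < R → J r + 1 < I (r + 1)) {r s : ℕ}
    (hr : 1 ≤ r) (hrs : r < s) (hs : s ≤ R) : J r + 1 < I s := by
  induction s, hrs using Nat.le_induction with
  | base => exact hgap r hr (by omega)
  | succ s hrs ih =>
    have := ih (by omega)
    have := hIJ s (by omega) (by omega)
    have := hgap s (by omega) (by omega)
    omega

theorem pairwiseDisjoint_runs (hIJ : ∀ r, 1 ≤ r → r ≤ R → I r ≤ J r)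
    (hgap : ∀ r, 1 ≤ r → r < R → J r + 1 < I (r + 1)) :
    (↑(Icc 1 R) : Set ℕ).PairwiseDisjoint (fun r => Icc (I r) (J r)) := by
  suffices h : ∀ r ∈ Icc 1 R, ∀ s ∈ Icc 1 R, r < s → Disjoint (Icc (I r) (J r)) (Icc (I s) (J s)) by
    intro r hr s hs hrs
    rcases hrs.lt_or_gt with hlt | hlt
    exacts [h r hr s hs hlt, (h s hs r hr hlt).symm]
  intro r hr s hs hrs
  rw [mem_Icc] at hr hs
  have := run_end_succ_lt_start hIJ hgap hr.1 hrs hs.2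
  exact disjoint_left.mpr fun k hk hk' => by simp only [mem_Icc] at hk hk'; omega

theorem pred_run_start_not_mem (hIJ : ∀ r, 1 ≤ r → r ≤ R → 1 ≤ I r ∧ I r ≤ J r)
    (hgap : ∀ r, 1 ≤ r → r < R → J r + 1 < I (r + 1)) {r : ℕ} (hr : r ∈ Icc 1 R) :
    I r - 1 ∉ (Icc 1 R).biUnion (fun r => Icc (I r) (J r)) := by
  simp only [mem_biUnion, mem_Icc, not_exists, not_and] at hr ⊢
  intro s hs hIs hJs
  have hIr := hIJ r hr.1 hr.2
  have hIs' := hIJ s hs.1 hs.2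
  rcases lt_trichotomy s r with h | rfl | h
  · have := run_end_succ_lt_start (fun r h1 h2 => (hIJ r h1 h2).2) hgap hs.1 h hr.2; omega
  · omega
  · have := run_end_succ_lt_start (fun r h1 h2 => (hIJ r h1 h2).2) hgap hr.1 h hs.2; omega

theorem sum_runs_sub_pred {M : Type*} [AddCommGroup M] (f : ℕ → M)
    (hIJ : ∀ r, 1 ≤ r → r ≤ R → 1 ≤ I r ∧ I r ≤ J r)
    (hgap : ∀ r, 1 ≤ r → r < R → J r + 1 < I (r + 1)) :
    ∑ k ∈ (Icc 1 R).biUnion (fun r => Icc (I r) (J r)), (f k - f (k - 1)) =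
      ∑ r ∈ Icc 1 R, (f (J r) - f (I r - 1)) := by
  rw [sum_biUnion (pairwiseDisjoint_runs (fun r h1 h2 => (hIJ r h1 h2).2) hgap)]
  refine sum_congr rfl fun r hr => ?_
  rw [mem_Icc] at hr
  have := hIJ r hr.1 hr.2
  exact sum_Icc_sub_pred f this.1 (by omega)

end Runs

section Credal

variable [Fintype X] {n : ℕ} {A : ℕ → Finset X} {α β : ℕ → ℝ}

theorem sum_le_of_mem_credalGPB (hA0 : A 0 = ∅) (hβ0 : β 0 = 0) {q : X → ℝ}
    (hq : q ∈ credalGPB n A α β) {k : ℕ} (hk : k ≤ n) : ∑ x ∈ A k, q x ≤ β k := by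
  rcases Nat.eq_zero_or_pos k with rfl | hk0
  · simp [hA0, hβ0]
  · exact (hq.2 k hk0 hk).2

variable [DecidableEq X]

theorem le_sum_layers_of_mem_credalGPB (hA0 : A 0 = ∅) (hβ0 : β 0 = 0)
    (hA : ∀ i j, i ≤ j → j ≤ n → A i ⊆ A j) {R : ℕ} {I J : ℕ → ℕ}
    (hIJ : ∀ r, 1 ≤ r → r ≤ R → 1 ≤ I r ∧ I r ≤ J r ∧ J r ≤ n)
    (hgap : ∀ r, 1 ≤ r → r < R → J r + 1 < I (r + 1)) {q : X → ℝ}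
    (hq : q ∈ credalGPB n A α β) :
    ∑ r ∈ Icc 1 R, max 0 (α (J r) - β (I r - 1)) ≤
      ∑ x ∈ ((Icc 1 R).biUnion (fun r => Icc (I r) (J r))).biUnion
        (fun k => A k \ A (k - 1)), q x := by
  set Q : ℕ → ℝ := fun k => ∑ x ∈ A k, q x
  have hIJ' : ∀ r, 1 ≤ r → r ≤ R → 1 ≤ I r ∧ I r ≤ J r :=
    fun r h1 h2 => ⟨(hIJ r h1 h2).1, (hIJ r h1 h2).2.1⟩
  have hrunsub : (Icc 1 R).biUnion (fun r => Icc (I r) (J r)) ⊆ Icc 1 n := by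
    intro k hk
    simp only [mem_biUnion, mem_Icc] at hk ⊢
    obtain ⟨r, hr, hk⟩ := hk
    have := hIJ r hr.1 hr.2
    omega
  have hlayer : ∀ k ∈ Icc 1 n, ∑ x ∈ A k \ A (k - 1), q x = Q k - Q (k - 1) := by
    intro k hk
    rw [mem_Icc] at hk
    exact sum_sdiff_eq_sub (hA (k - 1) k (by omega) hk.2)
  rw [sum_biUnion ((pairwiseDisjoint_layers hA).subset (by exact_mod_cast hrunsub)),
    sum_congr rfl fun k hk => hlayer k (hrunsub hk), sum_runs_sub_pred Q hIJ' hgap]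
  refine sum_le_sum fun r hr => ?_
  rw [mem_Icc] at hr
  obtain ⟨hI, hIJr, hJ⟩ := hIJ r hr.1 hr.2
  have hup := sum_le_of_mem_credalGPB hA0 hβ0 hq (k := I r - 1) (by omega)
  have hlow := (hq.2 (J r) (by omega) hJ).1
  have hmono : Q (I r - 1) ≤ Q (J r) :=
    sum_le_sum_of_subset_of_nonneg (hA _ _ (by omega) hJ) fun x _ _ => hq.1.1 x
  exact max_le (by linarith) (by linarith)

end Credal

section StepDist

variable [DecidableEq X] {n : ℕ} {x : ℕ → X} {c : ℕ → ℝ}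

noncomputable def stepDist (n : ℕ) (x : ℕ → X) (c : ℕ → ℝ) (y : X) : ℝ :=
  ∑ k ∈ Icc 1 n, if x k = y then c k - c (k - 1) else 0

theorem sum_stepDist (S : Finset X) :
    ∑ y ∈ S, stepDist n x c y = ∑ k ∈ (Icc 1 n).filter (fun k => x k ∈ S), (c k - c (k - 1)) := by
  simp only [stepDist]
  rw [sum_comm, sum_filter]
  exact sum_congr rfl fun k _ => sum_ite_eq S (x k) _

theorem stepDist_nonneg (hc : ∀ k ∈ Icc 1 n, c (k - 1) ≤ c k) (y : X) : 0 ≤ stepDist n x c y :=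
  sum_nonneg fun k hk => by
    split_ifs
    exacts [sub_nonneg.mpr (hc k hk), le_rfl]

theorem sum_stepDist_of_mem_layer {A : ℕ → Finset X} (hA : ∀ i j, i ≤ j → j ≤ n → A i ⊆ A j)
    (hx : ∀ k ∈ Icc 1 n, x k ∈ A k \ A (k - 1)) {j : ℕ} (hj : j ≤ n) :
    ∑ y ∈ A j, stepDist n x c y = c j - c 0 := by
  have hfilter : (Icc 1 n).filter (fun k => x k ∈ A j) = Icc 1 j := by
    ext k
    simp only [mem_filter, mem_Icc]
    constructor
    · rintro ⟨hk, hxk⟩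
      refine ⟨hk.1, not_lt.mp fun hjk => ?_⟩
      exact (mem_sdiff.mp (hx k (mem_Icc.mpr hk))).2 (hA j (k - 1) (by omega) (by omega) hxk)
    · rintro ⟨hk1, hkj⟩
      exact ⟨⟨hk1, hkj.trans hj⟩,
        hA k j hkj hj (mem_sdiff.mp (hx k (mem_Icc.mpr ⟨hk1, hkj.trans hj⟩))).1⟩
  rw [sum_stepDist, hfilter, sum_Icc_sub_pred c le_rfl (by omega)]

theorem sum_univ_stepDist [Fintype X] : ∑ y, stepDist n x c y = c n - c 0 := by
  rw [sum_stepDist, filter_true_of_mem fun k _ => mem_univ (x k),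
    sum_Icc_sub_pred c le_rfl (by omega)]

theorem stepDist_mem_credalGPB [Fintype X] {A : ℕ → Finset X} {α β : ℕ → ℝ}
    (hA : ∀ i j, i ≤ j → j ≤ n → A i ⊆ A j) (hx : ∀ k ∈ Icc 1 n, x k ∈ A k \ A (k - 1))
    (hc0 : c 0 = 0) (hcn : c n = 1) (hc : ∀ k ∈ Icc 1 n, c (k - 1) ≤ c k)
    (hαc : ∀ k, k ≤ n → α k ≤ c k) (hcβ : ∀ k, k ≤ n → c k ≤ β k) :
    stepDist n x c ∈ credalGPB n A α β := by
  refine ⟨⟨stepDist_nonneg hc, by rw [sum_univ_stepDist, hc0, hcn, sub_zero]⟩, fun k _ hk => ?_⟩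
  rw [sum_stepDist_of_mem_layer hA hx hk, hc0, sub_zero]
  exact ⟨hαc k hk, hcβ k hk⟩

end StepDist

section MinimizerCDF

variable {n : ℕ} {α β : ℕ → ℝ}

/-- Outside `K` this is `β k`: as much mass as possible is placed before a run of `K` begins,
and inside the run it grows only when `α` forces it to. -/
noncomputable def minimizerCDF (K : Finset ℕ) (α β : ℕ → ℝ) (k : ℕ) : ℝ :=
  max (α k) (β (Nat.findGreatest (· ∉ K) k))

theorem minimizerCDF_zero (K : Finset ℕ) (hα0 : α 0 = 0) (hβ0 : β 0 = 0) :
    minimizerCDF K α β 0 = 0 := by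
  simp [minimizerCDF, hα0, hβ0]

theorem minimizerCDF_mono (K : Finset ℕ) (hαmono : ∀ i j, i ≤ j → j ≤ n → α i ≤ α j)
    (hβmono : ∀ i j, i ≤ j → j ≤ n → β i ≤ β j) {k l : ℕ} (hkl : k ≤ l) (hl : l ≤ n) :
    minimizerCDF K α β k ≤ minimizerCDF K α β l :=
  max_le_max (hαmono k l hkl hl) (hβmono _ _ (Nat.findGreatest_mono_right _ hkl)
    ((Nat.findGreatest_le l).trans hl))

theorem minimizerCDF_le (K : Finset ℕ) (hβmono : ∀ i j, i ≤ j → j ≤ n → β i ≤ β j)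
    (hαβ : ∀ i, i ≤ n → α i ≤ β i) {k : ℕ} (hk : k ≤ n) : minimizerCDF K α β k ≤ β k :=
  max_le (hαβ k hk) (hβmono _ _ (Nat.findGreatest_le k) hk)

theorem minimizerCDF_of_notMem {K : Finset ℕ} (hαβ : ∀ i, i ≤ n → α i ≤ β i) {k : ℕ}
    (hk : k ≤ n) (hkK : k ∉ K) : minimizerCDF K α β k = β k := by
  rw [minimizerCDF, Nat.findGreatest_eq hkK]
  exact max_eq_right (hαβ k hk)

theorem minimizerCDF_run_end {R : ℕ} {I J : ℕ → ℕ}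
    (hIJ : ∀ r, 1 ≤ r → r ≤ R → 1 ≤ I r ∧ I r ≤ J r)
    (hgap : ∀ r, 1 ≤ r → r < R → J r + 1 < I (r + 1)) {r : ℕ} (hr : r ∈ Icc 1 R) :
    minimizerCDF ((Icc 1 R).biUnion (fun r => Icc (I r) (J r))) α β (J r) =
      max (α (J r)) (β (I r - 1)) := by
  have hIJr := hIJ r (mem_Icc.mp hr).1 (mem_Icc.mp hr).2
  have hgreatest : Nat.findGreatest (· ∉ (Icc 1 R).biUnion (fun r => Icc (I r) (J r))) (J r) =
      I r - 1 := by
    refine Nat.findGreatest_eq_iff.mpr ⟨by omega, fun _ => pred_run_start_not_mem hIJ hgap hr,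
      fun k hk hkJ hkK => hkK (mem_biUnion.mpr ⟨r, hr, mem_Icc.mpr ⟨by omega, hkJ⟩⟩)⟩
  rw [minimizerCDF, hgreatest]

theorem sum_runs_minimizerCDF_sub_pred {R : ℕ} {I J : ℕ → ℕ}
    (hIJ : ∀ r, 1 ≤ r → r ≤ R → 1 ≤ I r ∧ I r ≤ J r ∧ J r ≤ n)
    (hgap : ∀ r, 1 ≤ r → r < R → J r + 1 < I (r + 1)) (hαβ : ∀ i, i ≤ n → α i ≤ β i) :
    ∑ k ∈ (Icc 1 R).biUnion (fun r => Icc (I r) (J r)),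
        (minimizerCDF ((Icc 1 R).biUnion (fun r => Icc (I r) (J r))) α β k -
          minimizerCDF ((Icc 1 R).biUnion (fun r => Icc (I r) (J r))) α β (k - 1)) =
      ∑ r ∈ Icc 1 R, max 0 (α (J r) - β (I r - 1)) := by
  have hIJ' : ∀ r, 1 ≤ r → r ≤ R → 1 ≤ I r ∧ I r ≤ J r :=
    fun r h1 h2 => ⟨(hIJ r h1 h2).1, (hIJ r h1 h2).2.1⟩
  rw [sum_runs_sub_pred _ hIJ' hgap]
  refine sum_congr rfl fun r hr => ?_
  have := hIJ r (mem_Icc.mp hr).1 (mem_Icc.mp hr).2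
  rw [minimizerCDF_run_end hIJ' hgap hr,
    minimizerCDF_of_notMem hαβ (by omega) (pred_run_start_not_mem hIJ' hgap hr),
    ← max_sub_sub_right, sub_self, max_comm]

end MinimizerCDF

theorem exists_mem_layer_of_ssubset [DecidableEq X] {n : ℕ} {A : ℕ → Finset X}
    (hA : ∀ i, i < n → A i ⊂ A (i + 1)) (hn : 0 < n) (B : Finset X) :
    ∃ x : ℕ → X, ∀ k ∈ Icc 1 n, x k ∈ A k \ A (k - 1) ∧ (x k ∈ B → A k \ A (k - 1) ⊆ B) := by
  have : Nonempty X := (layer_nonempty hA (mem_Icc.mpr ⟨le_rfl, hn⟩)).to_subtype.map (↑)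
  have hpoint : ∀ k ∈ Icc 1 n, ∃ y, y ∈ A k \ A (k - 1) ∧ (y ∈ B → A k \ A (k - 1) ⊆ B) := by
    intro k hk
    by_cases hB : A k \ A (k - 1) ⊆ B
    · obtain ⟨y, hy⟩ := layer_nonempty hA hk
      exact ⟨y, hy, fun _ => hB⟩
    · obtain ⟨y, hy, hyB⟩ := not_subset.mp hB
      exact ⟨y, hy, fun h => absurd h hyB⟩
  choose! x hx using hpoint
  exact ⟨x, hx⟩

theorem exists_mem_credalGPB_sum_le [Fintype X] [DecidableEq X]
    {n : ℕ} {A : ℕ → Finset X} {α β : ℕ → ℝ}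
    (hAnest : ∀ i, i < n → A i ⊂ A (i + 1))
    (hα0 : α 0 = 0) (hαn : α n = 1)
    (hαmono : ∀ i j, i ≤ j → j ≤ n → α i ≤ α j)
    (hβ0 : β 0 = 0) (hβn : β n = 1)
    (hβmono : ∀ i j, i ≤ j → j ≤ n → β i ≤ β j)
    (hαβ : ∀ i, i ≤ n → α i ≤ β i)
    {B : Finset X} {R : ℕ} {I J : ℕ → ℕ}
    (hIJ : ∀ r, 1 ≤ r → r ≤ R → 1 ≤ I r ∧ I r ≤ J r ∧ J r ≤ n)
    (hgap : ∀ r, 1 ≤ r → r < R → J r + 1 < I (r + 1))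
    (hK : (Icc 1 n).filter (fun k => A k \ A (k - 1) ⊆ B) =
      (Icc 1 R).biUnion (fun r => Icc (I r) (J r))) :
    ∃ p ∈ credalGPB n A α β, ∑ x ∈ B, p x ≤ ∑ r ∈ Icc 1 R, max 0 (α (J r) - β (I r - 1)) := by
  set K := (Icc 1 R).biUnion (fun r => Icc (I r) (J r))
  set c := minimizerCDF K α β
  have hn : 0 < n := Nat.pos_of_ne_zero fun h => by simp [h, hα0] at hαn
  have hc : ∀ k ∈ Icc 1 n, c (k - 1) ≤ c k := fun k hk =>
    minimizerCDF_mono K hαmono hβmono (Nat.sub_le k 1) (mem_Icc.mp hk).2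
  have hcn : c n = 1 :=
    le_antisymm (hβn ▸ minimizerCDF_le K hβmono hαβ le_rfl) (hαn ▸ le_max_left _ _)
  obtain ⟨x, hx⟩ := exists_mem_layer_of_ssubset hAnest hn B
  have hA := fun i j => subset_of_ssubset_succ hAnest (i := i) (j := j)
  refine ⟨stepDist n x c, stepDist_mem_credalGPB hA (fun k hk => (hx k hk).1)
    (minimizerCDF_zero K hα0 hβ0) hcn hc (fun k _ => le_max_left _ _)
    (fun k hk => minimizerCDF_le K hβmono hαβ hk), ?_⟩
  have hfilter : (Icc 1 n).filter (fun k => x k ∈ B) ⊆ K := by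
    intro k hk
    obtain ⟨hkn, hkB⟩ := mem_filter.mp hk
    exact hK ▸ mem_filter.mpr ⟨hkn, (hx k hkn).2 hkB⟩
  calc ∑ y ∈ B, stepDist n x c y
      = ∑ k ∈ (Icc 1 n).filter (fun k => x k ∈ B), (c k - c (k - 1)) := sum_stepDist B
    _ ≤ ∑ k ∈ K, (c k - c (k - 1)) := sum_le_sum_of_subset_of_nonneg hfilter fun k hk _ =>
        sub_nonneg.mpr (hc k (mem_filter.mp (hK ▸ hk)).1)
    _ = ∑ r ∈ Icc 1 R, max 0 (α (J r) - β (I r - 1)) :=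
        sum_runs_minimizerCDF_sub_pred hIJ hgap hαβ

theorem isLeast_sum_image_of_subset {C : Set (X → ℝ)} (hC : ∀ q ∈ C, ∀ x, 0 ≤ q x)
    {S T : Finset X} (hST : S ⊆ T) {v : ℝ} (hlow : ∀ q ∈ C, v ≤ ∑ x ∈ S, q x)
    (hatt : ∃ p ∈ C, ∑ x ∈ T, p x ≤ v) :
    IsLeast ((fun q : X → ℝ => ∑ x ∈ T, q x) '' C) v ∧
      IsLeast ((fun q : X → ℝ => ∑ x ∈ S, q x) '' C) v := by
  obtain ⟨p, hp, hpv⟩ := hatt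
  have hST' : ∀ q ∈ C, ∑ x ∈ S, q x ≤ ∑ x ∈ T, q x := fun q hq =>
    sum_le_sum_of_subset_of_nonneg hST fun x _ _ => hC q hq x
  refine ⟨⟨⟨p, hp, le_antisymm hpv ((hlow p hp).trans (hST' p hp))⟩, ?_⟩,
    ⟨⟨p, hp, le_antisymm ((hST' p hp).trans hpv) (hlow p hp)⟩, ?_⟩⟩
  · rintro _ ⟨q, hq, rfl⟩
    exact (hlow q hq).trans (hST' q hq)
  · rintro _ ⟨q, hq, rfl⟩
    exact hlow q hq

theorem statement7_general [Fintype X] [DecidableEq X]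
    (n : ℕ) (A : ℕ → Finset X) (α β : ℕ → ℝ)
    (hA0 : A 0 = ∅)
    (hAnest : ∀ i, i < n → A i ⊂ A (i + 1))
    (hα0 : α 0 = 0) (hαn : α n = 1)
    (hαmono : ∀ i j, i ≤ j → j ≤ n → α i ≤ α j)
    (hβ0 : β 0 = 0) (hβn : β n = 1)
    (hβmono : ∀ i j, i ≤ j → j ≤ n → β i ≤ β j)
    (hαβ : ∀ i, i ≤ n → α i ≤ β i)
    (B : Finset X) (R : ℕ) (I J : ℕ → ℕ)
    -- the maximal runs of consecutive integers of `K = {k ∈ {1,…,n} : G_k ⊆ B}` are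
    -- `{I r, …, J r}` for `r = 1, …, R`:
    (hIJ : ∀ r, 1 ≤ r → r ≤ R → 1 ≤ I r ∧ I r ≤ J r ∧ J r ≤ n)
    (hgap : ∀ r, 1 ≤ r → r < R → J r + 1 < I (r + 1))
    (hK : (Finset.Icc 1 n).filter (fun k => A k \ A (k - 1) ⊆ B) =
      (Finset.Icc 1 R).biUnion (fun r => Finset.Icc (I r) (J r))) :
    IsLeast ((fun p : X → ℝ => ∑ x ∈ B, p x) '' credalGPB n A α β)
      (∑ r ∈ Finset.Icc 1 R, max 0 (α (J r) - β (I r - 1))) ∧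
    IsLeast
      ((fun p : X → ℝ =>
          ∑ x ∈ ((Finset.Icc 1 n).filter (fun k => A k \ A (k - 1) ⊆ B)).biUnion
              (fun k => A k \ A (k - 1)), p x) ''
        credalGPB n A α β)
      (∑ r ∈ Finset.Icc 1 R, max 0 (α (J r) - β (I r - 1))) := by
  have hA := fun i j => subset_of_ssubset_succ hAnest (i := i) (j := j)
  have hsub : ((Icc 1 n).filter (fun k => A k \ A (k - 1) ⊆ B)).biUnion
      (fun k => A k \ A (k - 1)) ⊆ B :=
    biUnion_subset.mpr fun k hk => (mem_filter.mp hk).2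
  refine isLeast_sum_image_of_subset (fun q hq => hq.1.1) hsub (fun q hq => ?_)
    (exists_mem_credalGPB_sum_le hAnest hα0 hαn hαmono hβ0 hβn hβmono hαβ hIJ hgap hK)
  rw [hK]
  exact le_sum_layers_of_mem_credalGPB hA0 hβ0 hA hIJ hgap hq

theorem statement7 [Fintype X] [Nonempty X] [DecidableEq X]
    (n : ℕ) (A : ℕ → Finset X) (α β : ℕ → ℝ)
    (hA0 : A 0 = ∅) (hAn : A n = Finset.univ)
    (hAnest : ∀ i, i < n → A i ⊂ A (i + 1))
    (hα0 : α 0 = 0) (hαn : α n = 1)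
    (hαmono : ∀ i j, i ≤ j → j ≤ n → α i ≤ α j)
    (hβ0 : β 0 = 0) (hβn : β n = 1)
    (hβmono : ∀ i j, i ≤ j → j ≤ n → β i ≤ β j)
    (hαβ : ∀ i, i ≤ n → α i ≤ β i)
    (B : Finset X) (R : ℕ) (I J : ℕ → ℕ)
    -- the maximal runs of consecutive integers of `K = {k ∈ {1,…,n} : G_k ⊆ B}` are
    -- `{I r, …, J r}` for `r = 1, …, R`:
    (hIJ : ∀ r, 1 ≤ r → r ≤ R → 1 ≤ I r ∧ I r ≤ J r ∧ J r ≤ n)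
    (hgap : ∀ r, 1 ≤ r → r < R → J r + 1 < I (r + 1))
    (hK : (Finset.Icc 1 n).filter (fun k => A k \ A (k - 1) ⊆ B) =
      (Finset.Icc 1 R).biUnion (fun r => Finset.Icc (I r) (J r))) :
    IsLeast ((fun p : X → ℝ => ∑ x ∈ B, p x) '' credalGPB n A α β)
      (∑ r ∈ Finset.Icc 1 R, max 0 (α (J r) - β (I r - 1))) ∧
    IsLeast
      ((fun p : X → ℝ =>
          ∑ x ∈ ((Finset.Icc 1 n).filter (fun k => A k \ A (k - 1) ⊆ B)).biUnion
              (fun k => A k \ A (k - 1)), p x) ''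
        credalGPB n A α β)
      (∑ r ∈ Finset.Icc 1 R, max 0 (α (J r) - β (I r - 1))) :=
  statement7_general n A α β hA0 hAnest hα0 hαn hαmono hβ0 hβn hβmono hαβ B R I J hIJ hgap hK
end

section
/- Let X = {x_1,…,x_n} be a finite set with n distinct elements and let a generalized p-box on X be given by the nested sets A_i = {x_1,…,x_i} with bounds α_i, β_i and credal set 𝒫. Then for every i ∈ {1,…,n}, the minimum of p(x_i) over p ∈ 𝒫 equals max(0, α_i − β_{i−1}) and the maximum of p(x_i) over p ∈ 𝒫 equals β_i − α_{i−1}. -/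
open Finset
open scoped Classical

variable {X : Type*}

/-!
A distribution `p` is determined by its cumulative values `F k = P(A_k)`, and
`p(x_i) = F i - F (i-1)` with `α_k ≤ F k ≤ β_k`, which gives both bounds. Conversely, any `a ≤ b`
admissible as `F (i-1)` and `F i` extend to an admissible monotone `F`: clamp the step function
`k ↦ if k < i then a else b` between `α` and `β`. The pairs `(α_i - max 0 (α_i - β_{i-1}), α_i)`
and `(α_{i-1}, β_i)` attain the bounds.
-/

open Finset

theorem Finset.sum_Icc_one_sub_pred {M : Type*} [AddCommGroup M] (γ : ℕ → M) (k : ℕ) :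
    ∑ j ∈ Icc 1 k, (γ j - γ (j - 1)) = γ k - γ 0 := by
  induction k with
  | zero => simp
  | succ k ih =>
    rw [sum_Icc_succ_top (by omega), ih, Nat.add_sub_cancel]
    abel

section CumulativeSums

variable [DecidableEq X] {n : ℕ} {x : ℕ → X}

theorem sum_image_Icc_of_injOn {M : Type*} [AddCommMonoid M] (hinj : Set.InjOn x (Set.Icc 1 n))
    {k : ℕ} (hk : k ≤ n) (p : X → M) :
    ∑ y ∈ (Icc 1 k).image x, p y = ∑ j ∈ Icc 1 k, p (x j) :=
  sum_image (hinj.mono (by rw [coe_Icc]; exact Set.Icc_subset_Icc_right hk))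

theorem apply_eq_sum_image_Icc_sub (hinj : Set.InjOn x (Set.Icc 1 n)) {j : ℕ} (hj : 1 ≤ j)
    (hjn : j ≤ n) (p : X → ℝ) :
    p (x j) = ∑ y ∈ (Icc 1 j).image x, p y - ∑ y ∈ (Icc 1 (j - 1)).image x, p y := by
  obtain ⟨m, rfl⟩ := Nat.exists_eq_add_of_le' hj
  rw [sum_image_Icc_of_injOn hinj hjn, sum_image_Icc_of_injOn hinj (by omega), Nat.add_sub_cancel,
    sum_Icc_succ_top (by omega)]
  ring

theorem exists_isProbDist_sum_image_Icc_eq [Fintype X] (hinj : Set.InjOn x (Set.Icc 1 n))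
    (hsurj : (Icc 1 n).image x = univ) (γ : ℕ → ℝ) (hγ0 : γ 0 = 0) (hγn : γ n = 1)
    (hγ : MonotoneOn γ (Set.Iic n)) :
    ∃ p : X → ℝ, IsProbDist p ∧ ∀ k ≤ n, ∑ y ∈ (Icc 1 k).image x, p y = γ k := by
  obtain ⟨idx, hidx⟩ : ∃ idx : X → ℕ, ∀ j ∈ Icc 1 n, idx (x j) = j :=
    ⟨_, fun j hj => hinj.leftInvOn_invFunOn (by simpa using hj)⟩
  have hp : ∀ j ∈ Icc 1 n, γ (idx (x j)) - γ (idx (x j) - 1) = γ j - γ (j - 1) := fun j hj => by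
    rw [hidx j hj]
  have hsum : ∀ k ≤ n, ∑ y ∈ (Icc 1 k).image x, (γ (idx y) - γ (idx y - 1)) = γ k := fun k hk => by
    rw [sum_image_Icc_of_injOn hinj hk, sum_congr rfl fun j hj => hp j (Icc_subset_Icc_right hk hj),
      sum_Icc_one_sub_pred, hγ0, sub_zero]
  refine ⟨fun y => γ (idx y) - γ (idx y - 1), ⟨fun y => ?_, ?_⟩, hsum⟩
  · obtain ⟨j, hj, rfl⟩ := mem_image.mp (hsurj ▸ mem_univ y)
    have hjn := (mem_Icc.mp hj).2
    dsimp only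
    rw [hp j hj, sub_nonneg]
    exact hγ (by simp only [Set.mem_Iic]; omega) hjn (Nat.sub_le j 1)
  · rw [← hsurj, hsum n le_rfl, hγn]

theorem bounds_of_mem_credalGPB [Fintype X] {α β : ℕ → ℝ} (hα0 : α 0 = 0) (hβ0 : β 0 = 0)
    {p : X → ℝ} (hp : p ∈ credalGPB n (fun k => (Icc 1 k).image x) α β) {k : ℕ} (hk : k ≤ n) :
    α k ≤ ∑ y ∈ (Icc 1 k).image x, p y ∧ ∑ y ∈ (Icc 1 k).image x, p y ≤ β k := by
  rcases Nat.eq_zero_or_pos k with rfl | hk1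
  · simp [hα0, hβ0]
  · exact hp.2 k hk1 hk

theorem sub_mem_image_credalGPB [Fintype X] (hinj : Set.InjOn x (Set.Icc 1 n))
    (hsurj : (Icc 1 n).image x = univ) {α β : ℕ → ℝ} (hα0 : α 0 = 0) (hαn : α n = 1)
    (hα : MonotoneOn α (Set.Iic n)) (hβ0 : β 0 = 0) (hβn : β n = 1) (hβ : MonotoneOn β (Set.Iic n))
    (hαβ : ∀ k ≤ n, α k ≤ β k) {i : ℕ} (hi : 1 ≤ i) (hin : i ≤ n) {a b : ℝ} (hab : a ≤ b)
    (ha : α (i - 1) ≤ a ∧ a ≤ β (i - 1)) (hb : α i ≤ b ∧ b ≤ β i) :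
    b - a ∈ (fun p : X → ℝ => p (x i)) '' credalGPB n (fun k => (Icc 1 k).image x) α β := by
  let step : ℕ → ℝ := fun k => if k < i then a else b
  let γ : ℕ → ℝ := fun k => max (α k) (min (step k) (β k))
  have hstep : Monotone step := fun k l hkl => by
    simp only [step]
    split_ifs <;> first | exact le_rfl | exact hab | omega
  have hclamp : ∀ {k c}, α k ≤ c → c ≤ β k → max (α k) (min c (β k)) = c := fun h₁ h₂ => by
    rw [min_eq_left h₂, max_eq_right h₁]
  have hγ0 : γ 0 = 0 := by simp only [γ, hα0, hβ0]; exact max_eq_left (min_le_right _ _)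
  have hγn : γ n = 1 := by simp only [γ, hαn, hβn]; exact max_eq_left (min_le_right _ _)
  have hγ : MonotoneOn γ (Set.Iic n) := hα.max ((hstep.monotoneOn _).min hβ)
  have hγi : γ i = b := by simp only [γ, step, lt_irrefl, if_false]; exact hclamp hb.1 hb.2
  have hγi' : γ (i - 1) = a := by
    simp only [γ, step, if_pos (Nat.sub_lt hi one_pos)]; exact hclamp ha.1 ha.2
  obtain ⟨p, hp, hpγ⟩ := exists_isProbDist_sum_image_Icc_eq hinj hsurj γ hγ0 hγn hγ
  refine ⟨p, ⟨hp, fun k _ hk => ?_⟩, ?_⟩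
  · rw [hpγ k hk]
    exact ⟨le_max_left _ _, max_le (hαβ k hk) (min_le_right _ _)⟩
  · dsimp only
    rw [apply_eq_sum_image_Icc_sub hinj hi hin p, hpγ i hin, hpγ (i - 1) (by omega), hγi, hγi']

end CumulativeSums

theorem statement9 [Fintype X] [DecidableEq X]
    (n : ℕ) (x : ℕ → X)
    (hinj : Set.InjOn x (Set.Icc 1 n))
    (hsurj : (Finset.Icc 1 n).image x = Finset.univ)
    (α β : ℕ → ℝ)
    (hα0 : α 0 = 0) (hαn : α n = 1)
    (hαmono : ∀ i j, i ≤ j → j ≤ n → α i ≤ α j)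
    (hβ0 : β 0 = 0) (hβn : β n = 1)
    (hβmono : ∀ i j, i ≤ j → j ≤ n → β i ≤ β j)
    (hαβ : ∀ i, i ≤ n → α i ≤ β i)
    (i : ℕ) (hi : 1 ≤ i) (hin : i ≤ n) :
    IsLeast
      ((fun p : X → ℝ => p (x i)) '' credalGPB n (fun k => (Finset.Icc 1 k).image x) α β)
      (max 0 (α i - β (i - 1))) ∧
    IsGreatest
      ((fun p : X → ℝ => p (x i)) '' credalGPB n (fun k => (Finset.Icc 1 k).image x) α β)
      (β i - α (i - 1)) := by
  have hα : MonotoneOn α (Set.Iic n) := fun k _ l hl hkl => hαmono k l hkl hl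
  have hβ : MonotoneOn β (Set.Iic n) := fun k _ l hl hkl => hβmono k l hkl hl
  have hαi := hαmono (i - 1) i (Nat.sub_le i 1) hin
  have hβi := hβmono (i - 1) i (Nat.sub_le i 1) hin
  have hαβi := hαβ (i - 1) (by omega)
  have hmem := fun a b => sub_mem_image_credalGPB (a := a) (b := b) hinj hsurj hα0 hαn hα hβ0 hβn
    hβ hαβ hi hin
  have hbounds : ∀ p ∈ credalGPB n (fun k => (Icc 1 k).image x) α β,
      α i - β (i - 1) ≤ p (x i) ∧ p (x i) ≤ β i - α (i - 1) := fun p hp => by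
    have hPi := bounds_of_mem_credalGPB hα0 hβ0 hp hin
    have hPi' := bounds_of_mem_credalGPB hα0 hβ0 hp (by omega : i - 1 ≤ n)
    rw [apply_eq_sum_image_Icc_sub hinj hi hin p]
    constructor <;> linarith
  refine ⟨⟨?_, ?_⟩, ⟨?_, ?_⟩⟩
  · simpa using hmem (α i - max 0 (α i - β (i - 1))) (α i) (by simp)
      ⟨le_sub_comm.mp (max_le (by linarith) (by linarith)), sub_le_comm.mp (le_max_right _ _)⟩
      ⟨le_rfl, hαβ i hin⟩
  · rintro _ ⟨p, hp, rfl⟩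
    exact max_le (hp.1.1 _) (hbounds p hp).1
  · exact hmem _ _ (by linarith) ⟨le_rfl, hαβi⟩ ⟨hαβ i hin, le_rfl⟩
  · rintro _ ⟨p, hp, rfl⟩
    exact (hbounds p hp).2
end

section
/- Let (l,u) be a reachable probability interval on a finite set X = {x_1,…,x_n} with credal set 𝒫_L, and let S be a set of permutations of {1,…,n} such that every element of X occurs as the first element x_{σ(1)} or as the last element x_{σ(n)} of some σ ∈ S. Then 𝒫_L = ⋂_{σ∈S} 𝒫_{L''_σ}, where L''_σ is the probability interval obtained from the σ-p-box of (l,u). -/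
open Finset
open scoped Classical

variable {X : Type*}

/-- The credal set induced by a probability interval `(l, u)`. -/
def credalPI [Fintype X] (l u : X → ℝ) : Set (X → ℝ) :=
  {p | IsProbDist p ∧ ∀ y, l y ≤ p y ∧ p y ≤ u y}

/-- A probability interval `(l, u)` is reachable. -/
def Reachable [Fintype X] [DecidableEq X] (l u : X → ℝ) : Prop :=
  (∑ y, l y ≤ 1 ∧ 1 ≤ ∑ y, u y) ∧
    ∀ y : X, u y + ∑ z ∈ Finset.univ.erase y, l z ≤ 1 ∧
      1 ≤ l y + ∑ z ∈ Finset.univ.erase y, u z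

/-- The nested set `A_i^σ = {x_{σ(1)}, …, x_{σ(i)}}` (here `0`-indexed via `e : Fin n ≃ X`). -/
def Aperm [Fintype X] [DecidableEq X] {n : ℕ} (e : Fin n ≃ X) (σ : Equiv.Perm (Fin n))
    (i : ℕ) : Finset X :=
  (Finset.univ.filter (fun k : Fin n => (k : ℕ) < i)).image (fun k => e (σ k))

/-- `α_i^σ = max(∑_{x ∈ A_i^σ} l(x), 1 − ∑_{x ∉ A_i^σ} u(x))`, with `α_0^σ = 0`. -/
noncomputable def alphaPerm [Fintype X] [DecidableEq X] {n : ℕ} (e : Fin n ≃ X)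
    (σ : Equiv.Perm (Fin n)) (l u : X → ℝ) (i : ℕ) : ℝ :=
  if i = 0 then 0 else
    max (∑ y ∈ Aperm e σ i, l y) (1 - ∑ y ∈ (Aperm e σ i)ᶜ, u y)

/-- `β_i^σ = min(∑_{x ∈ A_i^σ} u(x), 1 − ∑_{x ∉ A_i^σ} l(x))`, with `β_0^σ = 0`. -/
noncomputable def betaPerm [Fintype X] [DecidableEq X] {n : ℕ} (e : Fin n ≃ X)
    (σ : Equiv.Perm (Fin n)) (l u : X → ℝ) (i : ℕ) : ℝ :=
  if i = 0 then 0 else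
    min (∑ y ∈ Aperm e σ i, u y) (1 - ∑ y ∈ (Aperm e σ i)ᶜ, l y)

/-- The credal set `𝒫_σ` of the `σ`-p-box obtained from the probability interval `(l, u)`. -/
def credalPerm [Fintype X] [DecidableEq X] {n : ℕ} (e : Fin n ≃ X) (σ : Equiv.Perm (Fin n))
    (l u : X → ℝ) : Set (X → ℝ) :=
  {p | IsProbDist p ∧ ∀ i, 1 ≤ i → i ≤ n →
    alphaPerm e σ l u i ≤ ∑ y ∈ Aperm e σ i, p y ∧
      ∑ y ∈ Aperm e σ i, p y ≤ betaPerm e σ l u i}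

/-- `l''_σ(x_{σ(i)}) = max(0, α_i^σ − β_{i−1}^σ)`. -/
noncomputable def lPerm [Fintype X] [DecidableEq X] {n : ℕ} (e : Fin n ≃ X)
    (σ : Equiv.Perm (Fin n)) (l u : X → ℝ) (y : X) : ℝ :=
  max 0 (alphaPerm e σ l u ((σ.symm (e.symm y)).val + 1) -
    betaPerm e σ l u (σ.symm (e.symm y)).val)

/-- `u''_σ(x_{σ(i)}) = β_i^σ − α_{i−1}^σ`. -/
noncomputable def uPerm [Fintype X] [DecidableEq X] {n : ℕ} (e : Fin n ≃ X)
    (σ : Equiv.Perm (Fin n)) (l u : X → ℝ) (y : X) : ℝ :=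
  betaPerm e σ l u ((σ.symm (e.symm y)).val + 1) -
    alphaPerm e σ l u (σ.symm (e.symm y)).val

/-! Every `p` in the credal set of `(l, u)` satisfies `P(A_i^σ) ∈ [α_i^σ, β_i^σ]`, hence
`p(x_{σ(i)}) = P(A_i^σ) - P(A_{i-1}^σ) ∈ [α_i^σ - β_{i-1}^σ, β_i^σ - α_{i-1}^σ]`, so `𝒫_L ⊆ 𝒫_{L''_σ}`.
Conversely, if `x` is the first element of `σ` then `A_1^σ = {x}`, so `l''_σ(x) ≥ α_1^σ ≥ l(x)` and
`u''_σ(x) = β_1^σ ≤ u(x)`; if `x` is the last one then `(A_{n-1}^σ)ᶜ = {x}`, so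
`l''_σ(x) ≥ 1 - β_{n-1}^σ ≥ l(x)` and `u''_σ(x) ≤ 1 - α_{n-1}^σ ≤ u(x)`. Hence `⋂_σ 𝒫_{L''_σ}`
already imposes every constraint `l(x) ≤ p(x) ≤ u(x)`. -/

lemma perm_symm_apply_eq_iff {n : ℕ} (e : Fin n ≃ X) (σ : Equiv.Perm (Fin n)) {y : X}
    {k : Fin n} : σ.symm (e.symm y) = k ↔ y = e (σ k) := by
  rw [Equiv.symm_apply_eq, Equiv.symm_apply_eq]

section PBox

variable [Fintype X] [DecidableEq X] {n : ℕ} (e : Fin n ≃ X) (σ : Equiv.Perm (Fin n))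

lemma mem_Aperm {i : ℕ} {y : X} : y ∈ Aperm e σ i ↔ (σ.symm (e.symm y) : ℕ) < i := by
  simp only [Aperm, mem_image, mem_filter, mem_univ, true_and]
  constructor
  · rintro ⟨k, hk, rfl⟩
    simpa using hk
  · exact fun h => ⟨σ.symm (e.symm y), h, by simp⟩

lemma Aperm_zero : Aperm e σ 0 = ∅ := by
  ext y
  simp [mem_Aperm]

lemma Aperm_self : Aperm e σ n = univ := by
  ext y
  simp [mem_Aperm]

lemma Aperm_one (hn : 0 < n) : Aperm e σ 1 = {e (σ ⟨0, hn⟩)} := by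
  ext y
  rw [mem_Aperm, mem_singleton, ← perm_symm_apply_eq_iff, Fin.ext_iff, Nat.lt_one_iff]

lemma compl_Aperm_pred (hn : 0 < n) :
    (Aperm e σ (n - 1))ᶜ = {e (σ ⟨n - 1, Nat.sub_lt hn Nat.one_pos⟩)} := by
  ext y
  rw [mem_compl, mem_Aperm, mem_singleton, ← perm_symm_apply_eq_iff, Fin.ext_iff]
  dsimp only
  have := (σ.symm (e.symm y)).isLt
  omega

lemma sum_Aperm_succ (f : X → ℝ) (k : Fin n) :
    ∑ y ∈ Aperm e σ (k + 1), f y = f (e (σ k)) + ∑ y ∈ Aperm e σ k, f y := by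
  have hins : Aperm e σ (k + 1) = insert (e (σ k)) (Aperm e σ k) := by
    ext y
    rw [mem_insert, mem_Aperm, mem_Aperm, ← perm_symm_apply_eq_iff, Fin.ext_iff]
    omega
  rw [hins, sum_insert (by simp [mem_Aperm])]

lemma le_alphaPerm (l u : X → ℝ) {i : ℕ} (hi : i ≠ 0) :
    ∑ y ∈ Aperm e σ i, l y ≤ alphaPerm e σ l u i ∧
      1 - ∑ y ∈ (Aperm e σ i)ᶜ, u y ≤ alphaPerm e σ l u i := by
  rw [alphaPerm, if_neg hi]
  exact ⟨le_max_left _ _, le_max_right _ _⟩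

lemma betaPerm_le (l u : X → ℝ) {i : ℕ} (hi : i ≠ 0) :
    betaPerm e σ l u i ≤ ∑ y ∈ Aperm e σ i, u y ∧
      betaPerm e σ l u i ≤ 1 - ∑ y ∈ (Aperm e σ i)ᶜ, l y := by
  rw [betaPerm, if_neg hi]
  exact ⟨min_le_left _ _, min_le_right _ _⟩

variable {l u : X → ℝ}

@[simp] lemma alphaPerm_zero : alphaPerm e σ l u 0 = 0 := if_pos rfl

@[simp] lemma betaPerm_zero : betaPerm e σ l u 0 = 0 := if_pos rfl

lemma sum_Aperm_mem_Icc_of_mem_credalPI {p : X → ℝ} (hp : p ∈ credalPI l u) (i : ℕ) :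
    ∑ y ∈ Aperm e σ i, p y ∈ Set.Icc (alphaPerm e σ l u i) (betaPerm e σ l u i) := by
  obtain ⟨⟨-, hp_sum⟩, hplu⟩ := hp
  rcases eq_or_ne i 0 with rfl | hi
  · simp [Aperm_zero]
  set A := Aperm e σ i
  have hl (B : Finset X) : ∑ y ∈ B, l y ≤ ∑ y ∈ B, p y := sum_le_sum fun y _ => (hplu y).1
  have hu (B : Finset X) : ∑ y ∈ B, p y ≤ ∑ y ∈ B, u y := sum_le_sum fun y _ => (hplu y).2
  have hsplit : ∑ y ∈ A, p y + ∑ y ∈ Aᶜ, p y = 1 := by rw [sum_add_sum_compl, hp_sum]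
  rw [alphaPerm, betaPerm, if_neg hi, if_neg hi]
  exact ⟨max_le (hl A) (by linarith [hu Aᶜ]), le_min (hu A) (by linarith [hl Aᶜ])⟩

theorem credalPI_subset_credalPI_perm :
    credalPI l u ⊆ credalPI (lPerm e σ l u) (uPerm e σ l u) := by
  intro p hp
  refine ⟨hp.1, fun y => ?_⟩
  set k := σ.symm (e.symm y)
  have hk : e (σ k) = y := by simp [k]
  have hsum := sum_Aperm_succ e σ p k
  rw [hk] at hsum
  obtain ⟨hα₁, hβ₁⟩ := sum_Aperm_mem_Icc_of_mem_credalPI e σ hp (k + 1)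
  obtain ⟨hα₀, hβ₀⟩ := sum_Aperm_mem_Icc_of_mem_credalPI e σ hp k
  exact ⟨max_le (hp.1.1 y) (by linarith), by rw [uPerm]; linarith⟩

lemma le_lPerm_and_uPerm_le_of_first (hn : 0 < n) {y : X} (hy : e (σ ⟨0, hn⟩) = y) :
    l y ≤ lPerm e σ l u y ∧ uPerm e σ l u y ≤ u y := by
  subst hy
  simp only [lPerm, uPerm, Equiv.symm_apply_apply, zero_add]
  have hα := (le_alphaPerm e σ l u one_ne_zero).1
  have hβ := (betaPerm_le e σ l u one_ne_zero).1
  rw [Aperm_one e σ hn, sum_singleton] at hα hβ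
  rw [alphaPerm_zero, betaPerm_zero, sub_zero, sub_zero]
  exact ⟨le_max_of_le_right hα, hβ⟩

lemma le_lPerm_and_uPerm_le_of_last (hn : 0 < n) {y : X}
    (hy : e (σ ⟨n - 1, Nat.sub_lt hn Nat.one_pos⟩) = y) :
    l y ≤ lPerm e σ l u y ∧ uPerm e σ l u y ≤ u y := by
  subst hy
  rcases eq_or_ne (n - 1) 0 with hn1 | hn1
  · exact le_lPerm_and_uPerm_le_of_first e σ hn (by simp only [hn1])
  have hpred : n - 1 + 1 = n := Nat.sub_add_cancel hn
  have hα₁ := (le_alphaPerm e σ l u (i := n) (by omega)).2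
  have hβ₁ := (betaPerm_le e σ l u (i := n) (by omega)).2
  have hα₀ := (le_alphaPerm e σ l u hn1).2
  have hβ₀ := (betaPerm_le e σ l u hn1).2
  rw [Aperm_self, compl_univ, sum_empty] at hα₁ hβ₁
  rw [compl_Aperm_pred e σ hn, sum_singleton] at hα₀ hβ₀
  simp only [lPerm, uPerm, Equiv.symm_apply_apply, hpred]
  exact ⟨le_max_of_le_right (by linarith), by linarith⟩

end PBox

theorem statement11_general [Fintype X] [DecidableEq X] {n : ℕ} (hn : 0 < n)
    (e : Fin n ≃ X)
    (l u : X → ℝ)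
    (S : Set (Equiv.Perm (Fin n)))
    (hS : ∀ y : X, ∃ σ ∈ S,
      e (σ ⟨0, hn⟩) = y ∨ e (σ ⟨n - 1, Nat.sub_lt hn Nat.one_pos⟩) = y) :
    credalPI l u = ⋂ σ ∈ S, credalPI (lPerm e σ l u) (uPerm e σ l u) := by
  refine subset_antisymm (Set.subset_iInter₂ fun σ _ => credalPI_subset_credalPI_perm e σ) ?_
  intro p hp
  rw [Set.mem_iInter₂] at hp
  obtain ⟨σ₀, hσ₀, -⟩ := hS (e ⟨0, hn⟩)
  refine ⟨(hp σ₀ hσ₀).1, fun y => ?_⟩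
  obtain ⟨σ, hσ, hy⟩ := hS y
  have hbounds : l y ≤ lPerm e σ l u y ∧ uPerm e σ l u y ≤ u y := by
    rcases hy with hfirst | hlast
    · exact le_lPerm_and_uPerm_le_of_first e σ hn hfirst
    · exact le_lPerm_and_uPerm_le_of_last e σ hn hlast
  have hpy := (hp σ hσ).2 y
  exact ⟨hbounds.1.trans hpy.1, hpy.2.trans hbounds.2⟩

theorem statement11 [Fintype X] [Nonempty X] [DecidableEq X] {n : ℕ} (hn : 0 < n)
    (e : Fin n ≃ X)
    (l u : X → ℝ) (hlu : ∀ y, 0 ≤ l y ∧ l y ≤ u y ∧ u y ≤ 1)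
    (hreach : Reachable l u)
    (S : Set (Equiv.Perm (Fin n)))
    (hS : ∀ y : X, ∃ σ ∈ S,
      e (σ ⟨0, hn⟩) = y ∨ e (σ ⟨n - 1, Nat.sub_lt hn Nat.one_pos⟩) = y) :
    credalPI l u = ⋂ σ ∈ S, credalPI (lPerm e σ l u) (uPerm e σ l u) :=
  statement11_general hn e l u S hS
end

section
/- Let m be a mass assignment on a nonempty finite set X with belief function Bel and credal set 𝒫_Bel. Then 𝒫_Bel is nonempty and for every A ⊆ X, Bel(A) = min_{p ∈ 𝒫_Bel} P(A); that is, the belief function is the lower envelope of its credal set. -/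
open Finset
open scoped Classical

variable {X : Type*}

/-- A mass assignment (random set) on the finite set `X`. -/
def IsMass [Fintype X] [DecidableEq X] (m : Finset X → ℝ) : Prop :=
  (∀ E, 0 ≤ m E) ∧ m ∅ = 0 ∧ ∑ E : Finset X, m E = 1

/-- The belief function of a mass assignment: `Bel(B) = ∑_{E ⊆ B} m(E)`. -/
noncomputable def bel [Fintype X] [DecidableEq X] (m : Finset X → ℝ) (B : Finset X) : ℝ :=
  ∑ E ∈ Finset.univ.filter (fun E => E ⊆ B), m E

/-- The credal set induced by the belief function of a mass assignment. -/
def credalBel [Fintype X] [DecidableEq X] (m : Finset X → ℝ) : Set (X → ℝ) :=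
  {p | IsProbDist p ∧ ∀ B : Finset X, bel m B ≤ ∑ x ∈ B, p x}

/-! Each focal set `E` hands its mass `m E` to a single point `s E ∈ E`. The resulting
distribution dominates `Bel`, since every `E ⊆ A` puts its mass inside `A`; if moreover `s`
picks its point outside `B` whenever `E ⊄ B`, only the focal sets inside `B` put mass in `B`,
so the distribution gives `B` probability exactly `Bel B`. -/

section PushForward

variable [Fintype X] [DecidableEq X] (m : Finset X → ℝ) (s : Finset X → X)

noncomputable def pushMass (x : X) : ℝ :=
  ∑ E ∈ univ.filter (fun E => s E = x), m E

theorem sum_pushMass (A : Finset X) :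
    ∑ x ∈ A, pushMass m s x = ∑ E ∈ univ.filter (fun E => s E ∈ A), m E :=
  sum_fiberwise_eq_sum_filter univ A s m

theorem isProbDist_pushMass (hm : IsMass m) : IsProbDist (pushMass m s) := by
  refine ⟨fun x => sum_nonneg fun E _ => hm.1 E, ?_⟩
  rw [sum_pushMass, filter_true_of_mem fun E _ => mem_univ (s E), hm.2.2]

variable {m s}

theorem bel_le_sum_pushMass (hm : IsMass m) (hs : ∀ E : Finset X, E.Nonempty → s E ∈ E)
    (A : Finset X) : bel m A ≤ ∑ x ∈ A, pushMass m s x := by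
  rw [sum_pushMass, bel, sum_filter, sum_filter]
  refine sum_le_sum fun E _ => ?_
  rcases E.eq_empty_or_nonempty with rfl | hE
  · simp [hm.2.1]
  · by_cases hEA : E ⊆ A
    · simp [hEA, hEA (hs E hE)]
    · simp only [hEA, if_false]
      exact ite_nonneg (hm.1 E) le_rfl

theorem sum_pushMass_eq_bel (hm0 : m ∅ = 0) (hs : ∀ E : Finset X, E.Nonempty → s E ∈ E)
    {B : Finset X} (hB : ∀ E : Finset X, ¬E ⊆ B → s E ∉ B) :
    ∑ x ∈ B, pushMass m s x = bel m B := by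
  rw [sum_pushMass, bel, sum_filter, sum_filter]
  refine sum_congr rfl fun E _ => ?_
  rcases E.eq_empty_or_nonempty with rfl | hE
  · simp [hm0]
  · by_cases hEB : E ⊆ B
    · simp [hEB, hEB (hs E hE)]
    · simp [hEB, hB E hEB]

end PushForward

theorem exists_selection_avoiding [Nonempty X] (B : Finset X) :
    ∃ s : Finset X → X, ∀ E : Finset X, (E.Nonempty → s E ∈ E) ∧ (¬E ⊆ B → s E ∉ B) := by
  suffices ∀ E : Finset X, ∃ x, (E.Nonempty → x ∈ E) ∧ (¬E ⊆ B → x ∉ B) by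
    choose s hs using this
    exact ⟨s, hs⟩
  intro E
  by_cases hEB : E ⊆ B
  · rcases E.eq_empty_or_nonempty with rfl | ⟨x, hx⟩
    · exact ⟨Classical.arbitrary X, by simp, by simp⟩
    · exact ⟨x, fun _ => hx, fun h => absurd hEB h⟩
  · obtain ⟨x, hxE, hxB⟩ := not_subset.mp hEB
    exact ⟨x, fun _ => hxE, fun _ => hxB⟩

theorem statement16 [Fintype X] [Nonempty X] [DecidableEq X]
    (m : Finset X → ℝ) (hm : IsMass m) :
    (credalBel m).Nonempty ∧
      ∀ B : Finset X,
        IsLeast ((fun p : X → ℝ => ∑ x ∈ B, p x) '' credalBel m) (bel m B) := by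
  have tight : ∀ B : Finset X, ∃ p ∈ credalBel m, ∑ x ∈ B, p x = bel m B := by
    intro B
    obtain ⟨s, hs⟩ := exists_selection_avoiding B
    have hsel : ∀ E : Finset X, E.Nonempty → s E ∈ E := fun E => (hs E).1
    exact ⟨pushMass m s, ⟨isProbDist_pushMass m s hm, bel_le_sum_pushMass hm hsel⟩,
      sum_pushMass_eq_bel hm.2.1 hsel fun E => (hs E).2⟩
  refine ⟨(tight ∅).imp fun p hp => hp.1, fun B => ⟨tight B, ?_⟩⟩
  rintro _ ⟨p, hp, rfl⟩
  exact hp.2 B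
end
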